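/- If the optimal constant in the 2-variable case is C_{(2),p} = 2^{1/2−1/p} for p ≥ p₀/(p₀−1), then combining with the inequality (Σ_j (Σ_k |A(e_j,e_k)|^{p/(p−1)})^{2(p−1)/p})^{1/2} ≤ √2‖A‖ via the mixed Hölder inequality yields C_{p,∞} ≤ (√2)^{1/2} · (2^{(p−2)/(2p)})^{1/2} = 2^{1/2 − 1/(2p)} for the exponent 4p/(3p−2); in particular 2^{1/2−1/p} ≤ C_{p,∞} ≤ 2^{1/2−1/(2p)} for all p ≥ p₀/(p₀−1). -/

import Mathlib

open Real

noncomputable section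

/-- `c₀`: the space of real sequences vanishing at infinity, with the sup norm. -/
abbrev Czero := ZeroAtInftyContinuousMap ℕ ℝ

noncomputable instance : SeminormedAddCommGroup (Czero →L[ℝ] ℝ) :=
  ContinuousLinearMap.toSeminormedAddCommGroup

noncomputable instance : NormedSpace ℝ (Czero →L[ℝ] ℝ) :=
  ContinuousLinearMap.toNormedSpace

noncomputable instance (k : ℕ) :
    SeminormedAddCommGroup (ContinuousMultilinearMap ℝ (fun _ : Fin k => Czero) ℝ) :=
  ContinuousMultilinearMap.seminormedAddCommGroup

noncomputable instance (k : ℕ) :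
    NormedSpace ℝ (ContinuousMultilinearMap ℝ (fun _ : Fin k => Czero) ℝ) :=
  ContinuousMultilinearMap.normedSpace

/-- The canonical unit vector `e_k` in `c₀`. -/
def e0 (k : ℕ) : Czero :=
{ toFun := fun n => if n = k then 1 else 0,
  continuous_toFun := continuous_of_discreteTopology,
  zero_at_infty' := by
    rw [cocompact_eq_atTop]
    refine Filter.Tendsto.congr' ?_ tendsto_const_nhds
    filter_upwards [Filter.eventually_gt_atTop k] with n hn
    simp [Nat.ne_of_gt hn] }

/-- The canonical unit vector `e_j` in `ℓ_p`. -/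
def ep (p : ℝ) [Fact (1 ≤ ENNReal.ofReal p)] (j : ℕ) :
    lp (fun _ : ℕ => ℝ) (ENNReal.ofReal p) := lp.single _ j 1

/-!
For the upper bound, the exponent `r = 4p/(3p-2)` satisfies `1/r = (1/q + 1/2)/2` with
`q = p/(p-1)`, so Hölder's inequality along rows and then along columns interpolates the `ℓ_r`
norm of the coefficient matrix between the mixed norms `ℓ_q(ℓ_2)` and `ℓ_2(ℓ_q)`:
`‖a‖_r ≤ ‖a‖_{q(2)}^{1/2} ‖a‖_{2(q)}^{1/2} ≤ (2^{1/2-1/p}‖A‖)^{1/2} (√2‖A‖)^{1/2}`,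
which is `2^{1/2-1/(2p)}‖A‖`.

For the lower bound, `A(x, y) = (x₀ + x₁) y₀ + (x₀ - x₁) y₁` has norm at most `2` and four
coefficients of modulus `1`, so every admissible constant is at least `4^{1/r}/2 = 2^{1/2-1/p}`.
The admissible constants form a closed set, so their infimum is the optimal constant.
-/

section MixedNorm

variable {ι κ : Type*} (I : Finset ι) (K : Finset κ)

def mixedNorm (s t : ℝ) (a : ι → κ → ℝ) : ℝ :=
  (∑ j ∈ I, (∑ k ∈ K, |a j k| ^ t) ^ (s / t)) ^ (1 / s)

lemma mixedNorm_self {r : ℝ} (hr : r ≠ 0) (a : ι → κ → ℝ) :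
    mixedNorm I K r r a = (∑ j ∈ I, ∑ k ∈ K, |a j k| ^ r) ^ (1 / r) := by
  simp [mixedNorm, div_self hr]

lemma mixedNorm_nonneg (s t : ℝ) (a : ι → κ → ℝ) : 0 ≤ mixedNorm I K s t a := by
  unfold mixedNorm; positivity

lemma sum_abs_rpow_le_of_holderTriple {t₁ t₂ r : ℝ} (h : (2 * t₁).HolderTriple (2 * t₂) r)
    (f : ι → ℝ) :
    ∑ i ∈ I, |f i| ^ r ≤
      (∑ i ∈ I, |f i| ^ t₁) ^ (r / (2 * t₁)) * (∑ i ∈ I, |f i| ^ t₂) ^ (r / (2 * t₂)) := by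
  have hsqrt : ∀ i ∈ I, 0 ≤ |f i| ^ (1 / 2 : ℝ) := fun i _ => by positivity
  have hpow : ∀ i (t : ℝ), (|f i| ^ (1 / 2 : ℝ)) ^ (2 * t) = |f i| ^ t := fun i t => by
    rw [← Real.rpow_mul (abs_nonneg _)]; ring_nf
  convert Real.Lr_rpow_le_Lp_mul_Lq_of_nonneg I h hsqrt hsqrt using 3 with i _ i _ i _
  · rw [← Real.sqrt_eq_rpow, Real.mul_self_sqrt (abs_nonneg _)]
  all_goals exact Finset.sum_congr rfl fun i _ => (hpow i _).symm

theorem mixedNorm_self_le_rpow_half_mul_rpow_half {s₁ s₂ t₁ t₂ r : ℝ}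
    (hs : (2 * s₁).HolderTriple (2 * s₂) r) (ht : (2 * t₁).HolderTriple (2 * t₂) r)
    (a : ι → κ → ℝ) :
    mixedNorm I K r r a ≤
      mixedNorm I K s₁ t₁ a ^ (1 / 2 : ℝ) * mixedNorm I K s₂ t₂ a ^ (1 / 2 : ℝ) := by
  obtain ⟨hs₁, hs₂, hr⟩ := hs.all_pos
  obtain ⟨ht₁, ht₂, -⟩ := ht.all_pos
  set F : ι → ℝ := fun j => ∑ k ∈ K, |a j k| ^ t₁
  set G : ι → ℝ := fun j => ∑ k ∈ K, |a j k| ^ t₂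
  have hF : ∀ j, 0 ≤ F j := fun j => by positivity
  have hG : ∀ j, 0 ≤ G j := fun j => by positivity
  set X := ∑ j ∈ I, F j ^ (s₁ / t₁)
  set Y := ∑ j ∈ I, G j ^ (s₂ / t₂)
  have key : ∑ j ∈ I, ∑ k ∈ K, |a j k| ^ r ≤ X ^ (r / (2 * s₁)) * Y ^ (r / (2 * s₂)) := by
    calc ∑ j ∈ I, ∑ k ∈ K, |a j k| ^ r
        ≤ ∑ j ∈ I, F j ^ (r / (2 * t₁)) * G j ^ (r / (2 * t₂)) :=
          Finset.sum_le_sum fun j _ => sum_abs_rpow_le_of_holderTriple K ht (a j)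
      _ = ∑ j ∈ I, (F j ^ (1 / (2 * t₁)) * G j ^ (1 / (2 * t₂))) ^ r := by
          refine Finset.sum_congr rfl fun j _ => ?_
          rw [Real.mul_rpow (by positivity) (by positivity), ← Real.rpow_mul (hF j),
            ← Real.rpow_mul (hG j)]
          ring_nf
      _ ≤ (∑ j ∈ I, (F j ^ (1 / (2 * t₁))) ^ (2 * s₁)) ^ (r / (2 * s₁)) *
            (∑ j ∈ I, (G j ^ (1 / (2 * t₂))) ^ (2 * s₂)) ^ (r / (2 * s₂)) :=
          Real.Lr_rpow_le_Lp_mul_Lq_of_nonneg I hs (fun j _ => by positivity)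
            (fun j _ => by positivity)
      _ = X ^ (r / (2 * s₁)) * Y ^ (r / (2 * s₂)) := by
          simp only [← Real.rpow_mul (hF _), ← Real.rpow_mul (hG _), X, Y]
          congr 3 <;> refine funext fun j => ?_ <;> congr 1 <;> field_simp
  have hX : 0 ≤ X := by positivity
  have hY : 0 ≤ Y := by positivity
  calc mixedNorm I K r r a
      = (∑ j ∈ I, ∑ k ∈ K, |a j k| ^ r) ^ (1 / r) := mixedNorm_self I K hr.ne' a
    _ ≤ (X ^ (r / (2 * s₁)) * Y ^ (r / (2 * s₂))) ^ (1 / r) :=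
        Real.rpow_le_rpow (by positivity) key (by positivity)
    _ = (X ^ (1 / s₁)) ^ (1 / 2 : ℝ) * (Y ^ (1 / s₂)) ^ (1 / 2 : ℝ) := by
        rw [Real.mul_rpow (by positivity) (by positivity)]
        simp only [← Real.rpow_mul hX, ← Real.rpow_mul hY]
        congr 2 <;> field_simp
    _ = mixedNorm I K s₁ t₁ a ^ (1 / 2 : ℝ) * mixedNorm I K s₂ t₂ a ^ (1 / 2 : ℝ) := rfl

theorem rpow_sum_sum_abs_rpow_le_of_mixed_le {p : ℝ} (hp : 1 < p) (a : ι → κ → ℝ) {M₁ M₂ : ℝ}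
    (h₁ : (∑ j ∈ I, (∑ k ∈ K, |a j k| ^ (2 : ℝ)) ^ ((1 / 2) * (p / (p - 1)))) ^ ((p - 1) / p)
      ≤ M₁)
    (h₂ : (∑ j ∈ I, (∑ k ∈ K, |a j k| ^ (p / (p - 1))) ^ (2 * ((p - 1) / p))) ^ ((1 : ℝ) / 2)
      ≤ M₂) :
    (∑ j ∈ I, ∑ k ∈ K, |a j k| ^ (4 * p / (3 * p - 2))) ^ ((3 * p - 2) / (4 * p)) ≤
      M₁ ^ (1 / 2 : ℝ) * M₂ ^ (1 / 2 : ℝ) := by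
  have hholder : (2 * (p / (p - 1))).HolderTriple (2 * 2) (4 * p / (3 * p - 2)) := by
    have : p - 1 ≠ 0 := by linarith
    have : 3 * p - 2 ≠ 0 := by linarith
    refine ⟨?_, by positivity, by norm_num⟩
    field_simp
    ring
  have hq₁ : mixedNorm I K (p / (p - 1)) 2 a ≤ M₁ := by
    rwa [show (1 / 2 : ℝ) * (p / (p - 1)) = p / (p - 1) / 2 by ring,
      show (p - 1) / p = 1 / (p / (p - 1)) from (one_div_div _ _).symm] at h₁
  have hq₂ : mixedNorm I K 2 (p / (p - 1)) a ≤ M₂ := by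
    rwa [show 2 * ((p - 1) / p) = 2 / (p / (p - 1)) by rw [div_div_eq_mul_div, mul_div_assoc]]
      at h₂
  calc _ = mixedNorm I K (4 * p / (3 * p - 2)) (4 * p / (3 * p - 2)) a := by
        rw [mixedNorm_self I K hholder.ne_zero', one_div_div]
    _ ≤ mixedNorm I K (p / (p - 1)) 2 a ^ (1 / 2 : ℝ) *
          mixedNorm I K 2 (p / (p - 1)) a ^ (1 / 2 : ℝ) :=
        mixedNorm_self_le_rpow_half_mul_rpow_half I K hholder hholder.symm a
    _ ≤ M₁ ^ (1 / 2 : ℝ) * M₂ ^ (1 / 2 : ℝ) :=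
        mul_le_mul (Real.rpow_le_rpow (mixedNorm_nonneg I K _ _ a) hq₁ (by norm_num))
          (Real.rpow_le_rpow (mixedNorm_nonneg I K _ _ a) hq₂ (by norm_num))
          (Real.rpow_nonneg (mixedNorm_nonneg I K _ _ a) _)
          (Real.rpow_nonneg ((mixedNorm_nonneg I K _ _ a).trans hq₁) _)

end MixedNorm

lemma abs_add_add_abs_sub_le {a b c : ℝ} (ha : |a| ≤ c) (hb : |b| ≤ c) :
    |a + b| + |a - b| ≤ 2 * c := by
  rw [abs_le] at ha hb
  rcases abs_cases (a + b) with ⟨h, -⟩ | ⟨h, -⟩ <;>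
    rcases abs_cases (a - b) with ⟨h', -⟩ | ⟨h', -⟩ <;> linarith

def czeroEvalCLM (k : ℕ) : Czero →L[ℝ] ℝ :=
  LinearMap.mkContinuous
    { toFun := fun y => y k, map_add' := fun _ _ => rfl, map_smul' := fun _ _ => rfl } 1
    fun y => by
      simpa [← ZeroAtInftyContinuousMap.norm_toBCF_eq_norm] using y.toBCF.norm_coe_le_norm k

lemma norm_czeroEvalCLM_le (k : ℕ) : ‖czeroEvalCLM k‖ ≤ 1 :=
  LinearMap.mkContinuous_norm_le _ zero_le_one _

section ExtremalForm

variable (p : ℝ) [Fact (1 ≤ ENNReal.ofReal p)]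

local notation "ℓp" => lp (fun _ : ℕ => ℝ) (ENNReal.ofReal p)

def extremalForm : ℓp →L[ℝ] (Czero →L[ℝ] ℝ) :=
  let x₀ : ℓp →L[ℝ] ℝ := lp.evalCLM ℝ _ _ 0
  let x₁ : ℓp →L[ℝ] ℝ := lp.evalCLM ℝ _ _ 1
  (x₀ + x₁).smulRight (czeroEvalCLM 0) + (x₀ - x₁).smulRight (czeroEvalCLM 1)

lemma extremalForm_apply (x : ℓp) (y : Czero) :
    extremalForm p x y = (x 0 + x 1) * y 0 + (x 0 - x 1) * y 1 := rfl

lemma norm_extremalForm_le : ‖extremalForm p‖ ≤ 2 := by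
  refine ContinuousLinearMap.opNorm_le_bound _ zero_le_two fun x => ?_
  have hp : ENNReal.ofReal p ≠ 0 := (zero_lt_one.trans_le Fact.out).ne'
  calc ‖extremalForm p x‖
      ≤ ‖(x 0 + x 1) • czeroEvalCLM 0‖ + ‖(x 0 - x 1) • czeroEvalCLM 1‖ := norm_add_le _ _
    _ ≤ |x 0 + x 1| * 1 + |x 0 - x 1| * 1 := by
        simp only [norm_smul, Real.norm_eq_abs]
        gcongr <;> exact norm_czeroEvalCLM_le _
    _ ≤ 2 * ‖x‖ := by
        rw [mul_one, mul_one]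
        exact abs_add_add_abs_sub_le (lp.norm_apply_le_norm hp x 0) (lp.norm_apply_le_norm hp x 1)

lemma abs_extremalForm_ep_e0 {j k : ℕ} (hj : j < 2) (hk : k < 2) :
    |extremalForm p (ep p j) (e0 k)| = 1 := by
  have hep (i : ℕ) : ep p j i = if i = j then 1 else 0 := by
    unfold ep
    split_ifs with h
    · subst h; exact lp.single_apply_self _ _ _
    · exact lp.single_apply_ne _ _ _ h
  interval_cases j <;> interval_cases k <;> simp [extremalForm_apply, hep, e0]

end ExtremalForm

lemma two_rpow_le_of_extremalForm (p : ℝ) [Fact (1 ≤ ENNReal.ofReal p)] {C : ℝ}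
    (hC : (∑ j ∈ Finset.range 2, ∑ k ∈ Finset.range 2,
        |extremalForm p (ep p j) (e0 k)| ^ (4 * p / (3 * p - 2))) ^ ((3 * p - 2) / (4 * p))
      ≤ C * ‖extremalForm p‖) :
    2 ^ ((1 : ℝ) / 2 - 1 / p) ≤ C := by
  have hp : 1 ≤ p := ENNReal.one_le_ofReal.mp Fact.out
  have hsum : ∑ j ∈ Finset.range 2, ∑ k ∈ Finset.range 2,
      |extremalForm p (ep p j) (e0 k)| ^ (4 * p / (3 * p - 2)) = 4 := by
    norm_num [Finset.sum_range_succ, abs_extremalForm_ep_e0]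
  have hfour : (4 : ℝ) ^ ((3 * p - 2) / (4 * p)) = 2 * 2 ^ ((1 : ℝ) / 2 - 1 / p) := by
    calc (4 : ℝ) ^ ((3 * p - 2) / (4 * p)) = ((2 : ℝ) ^ (2 : ℝ)) ^ ((3 * p - 2) / (4 * p)) := by
          norm_num
      _ = 2 ^ (1 + (1 / 2 - 1 / p)) := by
          rw [← Real.rpow_mul zero_le_two]
          congr 1
          field_simp
          ring
      _ = 2 * 2 ^ ((1 : ℝ) / 2 - 1 / p) := by rw [Real.rpow_add two_pos, Real.rpow_one]
  rw [hsum, hfour] at hC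
  have hpos : 0 < (2 : ℝ) ^ ((1 : ℝ) / 2 - 1 / p) := by positivity
  have hC₀ : 0 < C := pos_of_mul_pos_left (hC.trans_lt' (by positivity)) (norm_nonneg _)
  nlinarith [mul_le_mul_of_nonneg_left (norm_extremalForm_le p) hC₀.le]

lemma rpow_half_mul_rpow_half_eq {p x : ℝ} (hx : 0 ≤ x) :
    (2 ^ ((1 : ℝ) / 2 - 1 / p) * x) ^ (1 / 2 : ℝ) * (√2 * x) ^ (1 / 2 : ℝ) =
      2 ^ ((1 : ℝ) / 2 - 1 / (2 * p)) * x := by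
  rw [Real.mul_rpow (by positivity) hx, Real.mul_rpow (by positivity) hx, mul_mul_mul_comm,
    ← Real.rpow_add' hx (by norm_num), Real.sqrt_eq_rpow, ← Real.rpow_mul zero_le_two,
    ← Real.rpow_mul zero_le_two, ← Real.rpow_add two_pos, add_halves, Real.rpow_one]
  congr 2
  ring

lemma exists_isLeast_of_isClosed {S : Set ℝ} (hS : IsClosed S) {a b : ℝ}
    (ha : a ∈ lowerBounds S) (hb : b ∈ S) : ∃ C, IsLeast S C ∧ a ≤ C ∧ C ≤ b :=
  have h := hS.isLeast_csInf ⟨b, hb⟩ ⟨a, ha⟩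
  ⟨sInf S, h, ha h.1, h.2 hb⟩

theorem stmt19_general (p₀ : ℝ) (h₁ : 1 < p₀)
    (p : ℝ) (hp : p₀ / (p₀ - 1) ≤ p) [Fact (1 ≤ ENNReal.ofReal p)]
    (hopt : IsLeast {C : ℝ |
      ∀ (A : lp (fun _ : ℕ => ℝ) (ENNReal.ofReal p) →L[ℝ] (Czero →L[ℝ] ℝ)) (N : ℕ),
        (∑ j ∈ Finset.range N, (∑ k ∈ Finset.range N,
            |A (ep p j) (e0 k)| ^ (2 : ℝ)) ^ ((1 / 2) * (p / (p - 1)))) ^ ((p - 1) / p)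
          ≤ C * ‖A‖}
      (2 ^ ((1 : ℝ) / 2 - 1 / p)))
    (hsqrt : ∀ (A : lp (fun _ : ℕ => ℝ) (ENNReal.ofReal p) →L[ℝ] (Czero →L[ℝ] ℝ)) (N : ℕ),
      (∑ j ∈ Finset.range N, (∑ k ∈ Finset.range N,
          |A (ep p j) (e0 k)| ^ (p / (p - 1))) ^ (2 * ((p - 1) / p))) ^ ((1 : ℝ) / 2)
        ≤ Real.sqrt 2 * ‖A‖) :
    ∃ C : ℝ, IsLeast {C : ℝ |
      ∀ (A : lp (fun _ : ℕ => ℝ) (ENNReal.ofReal p) →L[ℝ] (Czero →L[ℝ] ℝ)) (N : ℕ),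
        (∑ j ∈ Finset.range N, ∑ k ∈ Finset.range N,
            |A (ep p j) (e0 k)| ^ (4 * p / (3 * p - 2))) ^ ((3 * p - 2) / (4 * p))
          ≤ C * ‖A‖} C ∧
      2 ^ ((1 : ℝ) / 2 - 1 / p) ≤ C ∧ C ≤ 2 ^ ((1 : ℝ) / 2 - 1 / (2 * p)) := by
  have hp₁ : 1 < p := lt_of_lt_of_le (by rw [lt_div_iff₀ (by linarith)]; linarith) hp
  refine exists_isLeast_of_isClosed ?_ (fun C hC => two_rpow_le_of_extremalForm p (hC _ 2))
    fun A N => ?_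
  · simp only [Set.ofPred_forall]
    exact isClosed_iInter fun A => isClosed_iInter fun N =>
      isClosed_le continuous_const (continuous_id.mul continuous_const)
  exact (rpow_sum_sum_abs_rpow_le_of_mixed_le _ _ hp₁ _ (hopt.1 A N) (hsqrt A N)).trans_eq
    (rpow_half_mul_rpow_half_eq (norm_nonneg A))

/-- For `p ≥ p₀/(p₀−1)` (where `Γ((p₀+1)/2) = √π/2`): assuming the optimal constant in the
2-variable mixed inequality is `C_{(2),p} = 2^{1/2−1/p}`, and the mixed inequality
`(Σ_j (Σ_k |A(e_j,e_k)|^{p/(p−1)})^{2(p−1)/p})^{1/2} ≤ √2‖A‖`, the optimal constant `C_{p,∞}` in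
`(Σ_{j,k}|A(e_j,e_k)|^{4p/(3p−2)})^{(3p−2)/(4p)} ≤ C_{p,∞}‖A‖` over bounded bilinear
`A : ℓ_p × c₀ → ℝ` satisfies `2^{1/2−1/p} ≤ C_{p,∞} ≤ 2^{1/2−1/(2p)}`
(all sums expressed via all finite truncations). -/
theorem stmt19 (p₀ : ℝ) (h₁ : 1 < p₀) (h₂ : p₀ < 2)
    (hΓ : Real.Gamma ((p₀ + 1) / 2) = Real.sqrt π / 2)
    (p : ℝ) (hp : p₀ / (p₀ - 1) ≤ p) [Fact (1 ≤ ENNReal.ofReal p)]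
    (hopt : IsLeast {C : ℝ |
      ∀ (A : lp (fun _ : ℕ => ℝ) (ENNReal.ofReal p) →L[ℝ] (Czero →L[ℝ] ℝ)) (N : ℕ),
        (∑ j ∈ Finset.range N, (∑ k ∈ Finset.range N,
            |A (ep p j) (e0 k)| ^ (2 : ℝ)) ^ ((1 / 2) * (p / (p - 1)))) ^ ((p - 1) / p)
          ≤ C * ‖A‖}
      (2 ^ ((1 : ℝ) / 2 - 1 / p)))
    (hsqrt : ∀ (A : lp (fun _ : ℕ => ℝ) (ENNReal.ofReal p) →L[ℝ] (Czero →L[ℝ] ℝ)) (N : ℕ),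
      (∑ j ∈ Finset.range N, (∑ k ∈ Finset.range N,
          |A (ep p j) (e0 k)| ^ (p / (p - 1))) ^ (2 * ((p - 1) / p))) ^ ((1 : ℝ) / 2)
        ≤ Real.sqrt 2 * ‖A‖) :
    ∃ C : ℝ, IsLeast {C : ℝ |
      ∀ (A : lp (fun _ : ℕ => ℝ) (ENNReal.ofReal p) →L[ℝ] (Czero →L[ℝ] ℝ)) (N : ℕ),
        (∑ j ∈ Finset.range N, ∑ k ∈ Finset.range N,
            |A (ep p j) (e0 k)| ^ (4 * p / (3 * p - 2))) ^ ((3 * p - 2) / (4 * p))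
          ≤ C * ‖A‖} C ∧
      2 ^ ((1 : ℝ) / 2 - 1 / p) ≤ C ∧ C ≤ 2 ^ ((1 : ℝ) / 2 - 1 / (2 * p)) :=
  stmt19_general p₀ h₁ p hp hopt hsqrt
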